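/- Let m and d be positive integers, let S be a string of length m + d, and let p be a positive integer satisfying p = per(S[1 .. m]) = per(S[d+1 .. d+m]) and p < m − d. Then per(S[1 .. m+d]) = p. Moreover, if p divides d, then S[1 .. m] = S[d+1 .. d+m]. -/

import Mathlib

/-!
Both windows have period `p`, and since they overlap in at least `p` positions, every pair
`(i, i + p)` inside `S[1 .. m+d]` lies in one of them; so `p` is a period of the whole string.
It is minimal because a shorter period of the whole string would restrict to `S[1 .. m]`.
If `p ∣ d`, iterating the period `d / p` times shifts `S[1 .. m]` onto `S[d+1 .. d+m]`.
-/

/-- A string of length `n` is modeled as a function `S : ℕ → α`, read at the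
1-indexed positions `1, …, n`.  A positive integer `p ≤ n` is a *period* of `S`
if `S[i] = S[i+p]` holds for all `1 ≤ i ≤ n - p`. -/
def IsPeriod {α : Type*} (S : ℕ → α) (n p : ℕ) : Prop :=
  1 ≤ p ∧ p ≤ n ∧ ∀ i, 1 ≤ i → i + p ≤ n → S i = S (i + p)

/-- `per(S)`: the minimal period of the length-`n` string `S`. -/
noncomputable def minPer {α : Type*} (S : ℕ → α) (n : ℕ) : ℕ :=
  sInf {p | IsPeriod S n p}

section

variable {α : Type*} {S : ℕ → α} {n p : ℕ}

theorem isPeriod_self (hn : 1 ≤ n) : IsPeriod S n n :=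
  ⟨hn, le_rfl, fun _ _ _ => by omega⟩

theorem isPeriod_minPer (hn : 1 ≤ n) : IsPeriod S n (minPer S n) :=
  Nat.sInf_mem (s := {p | IsPeriod S n p}) ⟨n, isPeriod_self hn⟩

theorem minPer_le (h : IsPeriod S n p) : minPer S n ≤ p :=
  Nat.sInf_le h

theorem IsPeriod.of_le_length {n' : ℕ} (h : IsPeriod S n p) (hp : p ≤ n') (hn : n' ≤ n) :
    IsPeriod S n' p :=
  ⟨h.1, hp, fun i hi hip => h.2.2 i hi (by omega)⟩

theorem IsPeriod.apply_add_mul (h : IsPeriod S n p) (k : ℕ) {t : ℕ} (ht : 1 ≤ t)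
    (hk : t + p * k ≤ n) : S t = S (t + p * k) := by
  induction k generalizing t with
  | zero => rfl
  | succ k ih =>
    rw [Nat.mul_succ, ← Nat.add_assoc] at hk ⊢
    rw [h.2.2 t ht (by omega), ih (t := t + p) (by omega) (by omega), Nat.add_right_comm]

theorem IsPeriod.glue {m d : ℕ} (h₁ : IsPeriod S m p) (h₂ : IsPeriod (fun t => S (d + t)) m p)
    (hpd : p + d ≤ m) : IsPeriod S (m + d) p := by
  refine ⟨h₁.1, by omega, fun i hi hip => ?_⟩
  by_cases hleft : i + p ≤ m
  · exact h₁.2.2 i hi hleft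
  · obtain ⟨j, rfl⟩ : ∃ j, i = d + j := ⟨i - d, by omega⟩
    simpa only [Nat.add_assoc] using h₂.2.2 j (by omega) (by omega)

theorem minPer_eq_of_isPeriod_of_minPer_prefix {N : ℕ} (hN : IsPeriod S N p)
    (hprefix : minPer S n = p) (hpn : p ≤ n) (hnN : n ≤ N) : minPer S N = p := by
  refine le_antisymm (minPer_le hN) (le_csInf ⟨p, hN⟩ fun q hq => ?_)
  by_cases hqn : q ≤ n
  · exact hprefix ▸ minPer_le (hq.of_le_length hqn hnN)
  · omega

end

theorem period_glues_overlapping_windows_general {α : Type*} (S : ℕ → α) (m d p : ℕ)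
    (h1 : minPer S m = p)
    (h2 : minPer (fun t => S (d + t)) m = p)
    (hlt : p < m - d) :
    minPer S (m + d) = p ∧ (p ∣ d → ∀ t, 1 ≤ t → t ≤ m → S t = S (d + t)) := by
  have hm : 1 ≤ m := by omega
  have hP₁ : IsPeriod S m p := h1 ▸ isPeriod_minPer hm
  have hP₂ : IsPeriod (fun t => S (d + t)) m p := h2 ▸ isPeriod_minPer hm
  have hP : IsPeriod S (m + d) p := hP₁.glue hP₂ (by omega)
  refine ⟨minPer_eq_of_isPeriod_of_minPer_prefix hP h1 hP₁.2.1 (by omega), ?_⟩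
  rintro ⟨k, rfl⟩ t ht htm
  rw [hP.apply_add_mul k ht (by omega), Nat.add_comm]

/-- If `p = per(S[1 .. m]) = per(S[d+1 .. d+m])` and `p < m - d`, then
`per(S[1 .. m+d]) = p`; moreover, if `p ∣ d` then `S[1 .. m] = S[d+1 .. d+m]`.
Here `S[1 .. m]` is `t ↦ S t` (length `m`) and `S[d+1 .. d+m]` is `t ↦ S (d+t)` (length `m`). -/
theorem period_glues_overlapping_windows {α : Type*} (S : ℕ → α) (m d p : ℕ)
    (hm : 1 ≤ m) (hd : 1 ≤ d) (hp : 1 ≤ p)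
    (h1 : minPer S m = p)
    (h2 : minPer (fun t => S (d + t)) m = p)
    (hlt : p < m - d) :
    minPer S (m + d) = p ∧ (p ∣ d → ∀ t, 1 ≤ t → t ≤ m → S t = S (d + t)) :=
  period_glues_overlapping_windows_general S m d p h1 h2 hlt
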